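/- arXiv:math-ph/0610011 — 4 statements merged into one kernel-verified Lean document; each statement's English description precedes it below -/
import Mathlib

section
/- Let A be an associative algebra over a field K and N : A → A a linear map. Then for all A, B, C in A one has (A ∘_N B) ∘_N C − A ∘_N (B ∘_N C) = −( A·T_N(B,C) − T_N(A·B, C) + T_N(A, B·C) − T_N(A,B)·C ). Consequently, the deformed product ∘_N is associative if and only if the Nijenhuis torsion T_N is a Hochschild 2-cocycle, i.e. A·T_N(B,C) − T_N(A·B, C) + T_N(A, B·C) − T_N(A,B)·C = 0 for all A, B, C in A. -/
/-- The deformed product `A ∘_N B = N(A)·B + A·N(B) − N(A·B)`. -/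
def circN {K A : Type*} [Field K] [NonUnitalRing A] [Module K A]
    [SMulCommClass K A A] [IsScalarTower K A A]
    (N : A →ₗ[K] A) (a b : A) : A :=
  N a * b + a * N b - N (a * b)

/-- The Nijenhuis torsion `T_N(A,B) = N(A ∘_N B) − N(A)·N(B)`. -/
def torsionN {K A : Type*} [Field K] [NonUnitalRing A] [Module K A]
    [SMulCommClass K A A] [IsScalarTower K A A]
    (N : A →ₗ[K] A) (a b : A) : A :=
  N (circN N a b) - N a * N b

/-- `(A ∘_N B) ∘_N C − A ∘_N (B ∘_N C) = −δ_μ T_N(A,B,C)`; consequently `∘_N` is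
associative iff the Nijenhuis torsion `T_N` is a Hochschild 2-cocycle. -/
theorem circN_assoc_iff_torsion_cocycle
    {K A : Type*} [Field K] [NonUnitalRing A] [Module K A]
    [SMulCommClass K A A] [IsScalarTower K A A] (N : A →ₗ[K] A) :
    (∀ a b c : A,
      circN N (circN N a b) c - circN N a (circN N b c) =
        -(a * torsionN N b c - torsionN N (a * b) c + torsionN N a (b * c)
          - torsionN N a b * c)) ∧
    ((∀ a b c : A, circN N (circN N a b) c = circN N a (circN N b c)) ↔
      (∀ a b c : A,
        a * torsionN N b c - torsionN N (a * b) c + torsionN N a (b * c)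
          - torsionN N a b * c = 0)) := by
  have key : ∀ a b c : A,
      circN N (circN N a b) c - circN N a (circN N b c) =
        -(a * torsionN N b c - torsionN N (a * b) c + torsionN N a (b * c)
          - torsionN N a b * c) := by
    intro a b c
    simp only [circN, torsionN, map_add, map_sub, mul_add, add_mul, mul_sub, sub_mul, mul_assoc]
    abel
  refine ⟨key, ?_⟩
  constructor
  · intro h a b c
    have := key a b c
    rw [h a b c, sub_self] at this
    exact neg_eq_zero.mp this.symm
  · intro h a b c
    have := key a b c
    rw [h a b c, neg_zero] at this
    exact sub_eq_zero.mp this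
end

section
/- Let A be an associative algebra over a field K and N : A → A a linear map such that the deformed product ∘_N is associative. Then ∘_N is compatible with the original product: for every λ ∈ K, the product A ∗ B = A·B + λ (A ∘_N B) is associative. -/
/-- If the deformed product `∘_N` is associative, then it is compatible with the
original product: for every `λ ∈ K` the product `A ∗ B = A·B + λ (A ∘_N B)` is
associative. -/
theorem circN_compatible_of_assoc
    {K A : Type*} [Field K] [NonUnitalRing A] [Module K A]
    [SMulCommClass K A A] [IsScalarTower K A A] (N : A →ₗ[K] A)
    (hassoc : ∀ a b c : A, circN N (circN N a b) c = circN N a (circN N b c))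
    (l : K) :
    ∀ a b c : A,
      ((a * b + l • circN N a b) * c + l • circN N (a * b + l • circN N a b) c) =
        (a * (b * c + l • circN N b c) + l • circN N a (b * c + l • circN N b c)) := by
  intro a b c
  have h := hassoc a b c
  simp only [circN, mul_add, add_mul, mul_sub, sub_mul, smul_add, smul_sub, smul_mul_assoc,
    mul_smul_comm, map_add, map_sub, map_smul, mul_assoc] at h ⊢
  linear_combination (norm := module) (l * l) • h
end

section
/- Let A be an associative algebra over a field K with a direct sum decomposition into K-subspaces A = A₁ ⊕ A₂ where A₁ is a subalgebra, with projections P₁, P₂. Let ∘₁ be an associative product on A₁, let N₁, N₁′ : A₁ → A₁ be linear maps that are homomorphisms of ∘₁ into the original product, i.e. N₁(x ∘₁ y) = N₁(x)·N₁(y) and N₁′(x ∘₁ y) = N₁′(x)·N₁′(y) for all x, y ∈ A₁, and let N₂ : A₂ → A₂ be an invertible linear map. Then the product A ∘ B = P₁(A) ∘₁ P₁(B) + N₂^{-1}( P₂( N₁(P₁(A))·N₂(P₂(B)) + N₂(P₂(A))·N₁′(P₁(B)) ) ) is an associative product on A. -/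
/-- Let `A = A₁ ⊕ A₂` with `A₁` a subalgebra, `∘₁` an associative product on
`A₁`, `N₁, N₁′ : A₁ → A₁` homomorphisms of `∘₁` into the original product, and
`N₂ : A₂ → A₂` an invertible linear map. Then
`A ∘ B = P₁(A) ∘₁ P₁(B) + N₂⁻¹(P₂(N₁(P₁(A))·N₂(P₂(B)) + N₂(P₂(A))·N₁′(P₁(B))))`
is an associative product on `A`. -/
theorem deformed_twilled_product_assoc
    {K A : Type*} [Field K] [NonUnitalRing A] [Module K A]
    [SMulCommClass K A A] [IsScalarTower K A A]
    (A₁ A₂ : Submodule K A) (hc : IsCompl A₁ A₂)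
    (h₁ : ∀ x y : A, x ∈ A₁ → y ∈ A₁ → x * y ∈ A₁)
    (o₁ : A₁ → A₁ → A₁)
    (ho₁ : ∀ x y z : A₁, o₁ (o₁ x y) z = o₁ x (o₁ y z))
    (N₁ N₁' : A₁ →ₗ[K] A₁)
    (hN₁ : ∀ x y : A₁, (N₁ (o₁ x y) : A) = (N₁ x : A) * (N₁ y : A))
    (hN₁' : ∀ x y : A₁, (N₁' (o₁ x y) : A) = (N₁' x : A) * (N₁' y : A))
    (N₂ : A₂ ≃ₗ[K] A₂)
    (p₁ : A →ₗ[K] A₁) (hp₁ : p₁ = A₁.linearProjOfIsCompl A₂ hc)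
    (p₂ : A →ₗ[K] A₂) (hp₂ : p₂ = A₂.linearProjOfIsCompl A₁ hc.symm)
    (o : A → A → A)
    (ho : ∀ a b : A, o a b =
      (o₁ (p₁ a) (p₁ b) : A) +
      (N₂.symm (p₂ ((N₁ (p₁ a) : A) * (N₂ (p₂ b) : A)
        + (N₂ (p₂ a) : A) * (N₁' (p₁ b) : A))) : A)) :
    ∀ a b c : A, o (o a b) c = o a (o b c) := by
  have k1 : ∀ x : A₁, p₁ (x : A) = x := by
    intro x; rw [hp₁]; exact Submodule.linearProjOfIsCompl_apply_left hc x
  have k1' : ∀ y : A₂, p₁ (y : A) = 0 := by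
    intro y; rw [hp₁]; exact Submodule.linearProjOfIsCompl_apply_right hc y
  have k2 : ∀ x : A₁, p₂ (x : A) = 0 := by
    intro x; rw [hp₂]; exact Submodule.linearProjOfIsCompl_apply_right hc.symm x
  have k2' : ∀ y : A₂, p₂ (y : A) = y := by
    intro y; rw [hp₂]; exact Submodule.linearProjOfIsCompl_apply_left hc.symm y
  have k2m : ∀ x : A, x ∈ A₁ → p₂ x = 0 := by
    intro x hx; exact k2 ⟨x, hx⟩
  have hdec : ∀ x : A, (p₁ x : A) + (p₂ x : A) = x := by
    intro x; rw [hp₁, hp₂]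
    exact Submodule.projection_add_projection_eq_self hc x
  have keyL : ∀ (w : A) (z : A₁), p₂ ((p₂ w : A) * (z : A)) = p₂ (w * (z : A)) := by
    intro w z
    have h0 : p₂ ((p₁ w : A) * (z : A)) = 0 := k2m _ (h₁ _ _ (p₁ w).2 z.2)
    calc p₂ ((p₂ w : A) * (z : A))
        = p₂ ((p₁ w : A) * (z : A)) + p₂ ((p₂ w : A) * (z : A)) := by rw [h0, zero_add]
      _ = p₂ (((p₁ w : A) + (p₂ w : A)) * (z : A)) := by rw [add_mul, map_add]
      _ = p₂ (w * (z : A)) := by rw [hdec w]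
  have keyR : ∀ (w : A) (z : A₁), p₂ ((z : A) * (p₂ w : A)) = p₂ ((z : A) * w) := by
    intro w z
    have h0 : p₂ ((z : A) * (p₁ w : A)) = 0 := k2m _ (h₁ _ _ z.2 (p₁ w).2)
    calc p₂ ((z : A) * (p₂ w : A))
        = p₂ ((z : A) * (p₁ w : A)) + p₂ ((z : A) * (p₂ w : A)) := by rw [h0, zero_add]
      _ = p₂ ((z : A) * ((p₁ w : A) + (p₂ w : A))) := by rw [mul_add, map_add]
      _ = p₂ ((z : A) * w) := by rw [hdec w]
  intro a b c
  have hp1ab : p₁ (o a b) = o₁ (p₁ a) (p₁ b) := by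
    rw [ho, map_add, k1, k1', add_zero]
  have hp1bc : p₁ (o b c) = o₁ (p₁ b) (p₁ c) := by
    rw [ho, map_add, k1, k1', add_zero]
  have hp2ab : N₂ (p₂ (o a b)) = p₂ ((N₁ (p₁ a) : A) * (N₂ (p₂ b) : A)
      + (N₂ (p₂ a) : A) * (N₁' (p₁ b) : A)) := by
    rw [ho, map_add, k2, k2', zero_add, LinearEquiv.apply_symm_apply]
  have hp2bc : N₂ (p₂ (o b c)) = p₂ ((N₁ (p₁ b) : A) * (N₂ (p₂ c) : A)
      + (N₂ (p₂ b) : A) * (N₁' (p₁ c) : A)) := by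
    rw [ho, map_add, k2, k2', zero_add, LinearEquiv.apply_symm_apply]
  rw [ho (o a b) c, ho a (o b c), hp1ab, hp1bc, hp2ab, hp2bc]
  have e1 : (o₁ (o₁ (p₁ a) (p₁ b)) (p₁ c) : A) = o₁ (p₁ a) (o₁ (p₁ b) (p₁ c)) := by
    rw [ho₁]
  have key : p₂ ((N₁ (o₁ (p₁ a) (p₁ b)) : A) * (N₂ (p₂ c) : A)
      + (p₂ ((N₁ (p₁ a) : A) * (N₂ (p₂ b) : A) + (N₂ (p₂ a) : A) * (N₁' (p₁ b) : A)) : A)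
        * (N₁' (p₁ c) : A))
      = p₂ ((N₁ (p₁ a) : A)
        * (p₂ ((N₁ (p₁ b) : A) * (N₂ (p₂ c) : A) + (N₂ (p₂ b) : A) * (N₁' (p₁ c) : A)) : A)
      + (N₂ (p₂ a) : A) * (N₁' (o₁ (p₁ b) (p₁ c)) : A)) := by
    conv_lhs => rw [map_add]
    conv_rhs => rw [map_add]
    rw [keyL _ (N₁' (p₁ c)), keyR _ (N₁ (p₁ a)), hN₁, hN₁', ← map_add, ← map_add]
    congr 1
    noncomm_ring
  rw [e1, key]
end

section
/- Let A be an associative algebra over a field K with a direct sum decomposition into K-subspaces A = A₁ ⊕ A₂ where A₁ is a subalgebra, with projections P₁, P₂, and let N₁ : A₁ → A₁ be a Nijenhuis tensor on the subalgebra A₁. Then the extension N : A → A, N(A) = N₁(P₁(A)), is a Nijenhuis tensor on A if and only if for all A₁, B₁ ∈ A₁ and A₂, B₂ ∈ A₂: (i) N₁²(P₁(A₂·B₂)) = 0, (ii) N₁( P₁(N₁(A₁)·B₂) − N₁(P₁(A₁·B₂)) ) = 0, and (iii) N₁( P₁(A₂·N₁(B₁)) − N₁(P₁(A₂·B₁))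 ) = 0. In particular, N is a Nijenhuis tensor on A whenever A₂ is a two-sided ideal of A. -/
/-!
The Nijenhuis torsion `T_N(a, b) = N(N a * b + a * N b - N(a * b)) - N a * N b` is biadditive,
so `N` is Nijenhuis iff `T_N` vanishes on the four blocks `Aᵢ × Aⱼ`. On `A₁ × A₁` the extension
restricts to `N₁`, whose torsion vanishes. Since `N` kills `A₂`, on the other three blocks the
torsion collapses to `N(N a * y - N(a * y))`, `N(x * N b - N(x * b))` and `-N(N(x * y))`,
which are conditions (ii), (iii) and (i). When `A₂` is an ideal all three vanish, since `N`
kills every product involving `A₂`.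
-/

section NijenhuisTorsion

variable {K A : Type*} [Semiring K] [NonUnitalNonAssocRing A] [Module K A]

def nijenhuisTorsion (N : A →ₗ[K] A) (a b : A) : A :=
  N (N a * b + a * N b - N (a * b)) - N a * N b

variable (N : A →ₗ[K] A)

theorem nijenhuisTorsion_eq_zero_iff {a b : A} :
    nijenhuisTorsion N a b = 0 ↔ N (N a * b + a * N b - N (a * b)) = N a * N b :=
  sub_eq_zero

theorem nijenhuisTorsion_add_left (a a' b : A) :
    nijenhuisTorsion N (a + a') b = nijenhuisTorsion N a b + nijenhuisTorsion N a' b := by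
  simp only [nijenhuisTorsion, map_add, add_mul, map_sub]
  abel

theorem nijenhuisTorsion_add_right (a b b' : A) :
    nijenhuisTorsion N a (b + b') = nijenhuisTorsion N a b + nijenhuisTorsion N a b' := by
  simp only [nijenhuisTorsion, map_add, mul_add, map_sub]
  abel

theorem nijenhuisTorsion_of_apply_eq_zero_left {a : A} (ha : N a = 0) (b : A) :
    nijenhuisTorsion N a b = N (a * N b - N (a * b)) := by
  simp [nijenhuisTorsion, ha]

theorem nijenhuisTorsion_of_apply_eq_zero_right (a : A) {b : A} (hb : N b = 0) :
    nijenhuisTorsion N a b = N (N a * b - N (a * b)) := by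
  simp [nijenhuisTorsion, hb]

theorem nijenhuisTorsion_eq_zero_iff_of_codisjoint {A₁ A₂ : Submodule K A}
    (hc : Codisjoint A₁ A₂) :
    (∀ a b, nijenhuisTorsion N a b = 0) ↔
      (∀ a b : A₁, nijenhuisTorsion N a b = 0) ∧
      (∀ (a : A₁) (b : A₂), nijenhuisTorsion N a b = 0) ∧
      (∀ (a : A₂) (b : A₁), nijenhuisTorsion N a b = 0) ∧
      (∀ a b : A₂, nijenhuisTorsion N a b = 0) := by
  refine ⟨fun h ↦ ⟨fun a b ↦ h a b, fun a b ↦ h a b, fun a b ↦ h a b, fun a b ↦ h a b⟩,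
    fun ⟨h₁₁, h₁₂, h₂₁, h₂₂⟩ a b ↦ ?_⟩
  obtain ⟨a₁, a₂, ha₁, ha₂, rfl⟩ := Submodule.codisjoint_iff_exists_add_eq.mp hc a
  obtain ⟨b₁, b₂, hb₁, hb₂, rfl⟩ := Submodule.codisjoint_iff_exists_add_eq.mp hc b
  simp only [nijenhuisTorsion_add_left, nijenhuisTorsion_add_right, h₁₁ ⟨a₁, ha₁⟩ ⟨b₁, hb₁⟩,
    h₁₂ ⟨a₁, ha₁⟩ ⟨b₂, hb₂⟩, h₂₁ ⟨a₂, ha₂⟩ ⟨b₁, hb₁⟩, h₂₂ ⟨a₂, ha₂⟩ ⟨b₂, hb₂⟩, add_zero]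

end NijenhuisTorsion

section Extension

variable {K A : Type*} [Ring K] [NonUnitalNonAssocRing A] [Module K A]
  {A₁ A₂ : Submodule K A} {p₁ : A →ₗ[K] A₁} (N₁ : A₁ →ₗ[K] A₁)

theorem nijenhuisTorsion_extension_left_left (hp₁ : ∀ x : A₁, p₁ x = x)
    (mul₁ : A₁ → A₁ → A₁)
    (hmul₁ : ∀ x y : A₁, (mul₁ x y : A) = (x : A) * (y : A))
    (hN₁ : ∀ x y : A₁,
      N₁ (mul₁ (N₁ x) y + mul₁ x (N₁ y) - N₁ (mul₁ x y)) = mul₁ (N₁ x) (N₁ y))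
    (x y : A₁) :
    nijenhuisTorsion (A₁.subtype ∘ₗ N₁ ∘ₗ p₁) x y = 0 := by
  simp only [nijenhuisTorsion, LinearMap.comp_apply, Submodule.subtype_apply, hp₁,
    ← hmul₁, ← Submodule.coe_add, ← Submodule.coe_sub, hN₁, sub_self]

theorem nijenhuisTorsion_extension_left_right
    (hp₁ : ∀ x : A₁, p₁ x = x) (hp₂ : ∀ y : A₂, p₁ y = 0) (a : A₁) (y : A₂) :
    nijenhuisTorsion (A₁.subtype ∘ₗ N₁ ∘ₗ p₁) a y =
      N₁ (p₁ ((N₁ a : A) * (y : A)) - N₁ (p₁ ((a : A) * (y : A)))) := by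
  rw [nijenhuisTorsion_of_apply_eq_zero_right _ _ (by simp [hp₂])]
  simp [hp₁]

theorem nijenhuisTorsion_extension_right_left
    (hp₁ : ∀ x : A₁, p₁ x = x) (hp₂ : ∀ y : A₂, p₁ y = 0) (x : A₂) (b : A₁) :
    nijenhuisTorsion (A₁.subtype ∘ₗ N₁ ∘ₗ p₁) x b =
      N₁ (p₁ ((x : A) * (N₁ b : A)) - N₁ (p₁ ((x : A) * (b : A)))) := by
  rw [nijenhuisTorsion_of_apply_eq_zero_left _ (by simp [hp₂])]
  simp [hp₁]

theorem nijenhuisTorsion_extension_right_right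
    (hp₁ : ∀ x : A₁, p₁ x = x) (hp₂ : ∀ y : A₂, p₁ y = 0) (x y : A₂) :
    nijenhuisTorsion (A₁.subtype ∘ₗ N₁ ∘ₗ p₁) x y = -N₁ (N₁ (p₁ ((x : A) * (y : A)))) := by
  rw [nijenhuisTorsion_of_apply_eq_zero_left _ (by simp [hp₂])]
  simp [hp₁, hp₂]

end Extension

theorem extension_nijenhuis_iff_general
    {K A : Type*} [Field K] [NonUnitalRing A] [Module K A]
    (A₁ A₂ : Submodule K A) (hc : IsCompl A₁ A₂)
    (mul₁ : A₁ → A₁ → A₁)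
    (hmul₁ : ∀ x y : A₁, (mul₁ x y : A) = (x : A) * (y : A))
    (N₁ : A₁ →ₗ[K] A₁)
    (hN₁ : ∀ x y : A₁,
      N₁ (mul₁ (N₁ x) y + mul₁ x (N₁ y) - N₁ (mul₁ x y)) = mul₁ (N₁ x) (N₁ y))
    (p₁ : A →ₗ[K] A₁) (hp₁ : p₁ = A₁.linearProjOfIsCompl A₂ hc)
    (N : A →ₗ[K] A) (hN : N = A₁.subtype ∘ₗ N₁ ∘ₗ p₁) :
    ((∀ a b : A, N (N a * b + a * N b - N (a * b)) = N a * N b) ↔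
      ((∀ x y : A₂, N₁ (N₁ (p₁ ((x : A) * (y : A)))) = 0) ∧
       (∀ a : A₁, ∀ y : A₂,
         N₁ (p₁ ((N₁ a : A) * (y : A)) - N₁ (p₁ ((a : A) * (y : A)))) = 0) ∧
       (∀ x : A₂, ∀ b : A₁,
         N₁ (p₁ ((x : A) * (N₁ b : A)) - N₁ (p₁ ((x : A) * (b : A)))) = 0))) ∧
    ((∀ x ∈ A₂, ∀ a : A, a * x ∈ A₂ ∧ x * a ∈ A₂) →
      ∀ a b : A, N (N a * b + a * N b - N (a * b)) = N a * N b) := by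
  have hp_left : ∀ x : A₁, p₁ x = x := hp₁ ▸ Submodule.projectionOnto_apply_left hc
  have hp_mem : ∀ y ∈ A₂, p₁ y = 0 := fun _ ↦ hp₁ ▸ Submodule.projectionOnto_apply_of_mem_right hc
  have hp_right : ∀ y : A₂, p₁ y = 0 := fun y ↦ hp_mem y y.2
  subst hN
  simp only [← nijenhuisTorsion_eq_zero_iff]
  have criterion := nijenhuisTorsion_eq_zero_iff_of_codisjoint (A₁.subtype ∘ₗ N₁ ∘ₗ p₁)
    hc.codisjoint
  simp only [nijenhuisTorsion_extension_left_left N₁ hp_left mul₁ hmul₁ hN₁,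
    nijenhuisTorsion_extension_left_right N₁ hp_left hp_right,
    nijenhuisTorsion_extension_right_left N₁ hp_left hp_right,
    nijenhuisTorsion_extension_right_right N₁ hp_left hp_right,
    neg_eq_zero, Submodule.coe_eq_zero, implies_true, true_and] at criterion
  refine ⟨criterion.trans and_rotate.symm,
    fun hI ↦ criterion.mpr ⟨fun a y ↦ ?_, fun x b ↦ ?_, fun x y ↦ ?_⟩⟩
  · rw [hp_mem _ (hI y y.2 _).1, hp_mem _ (hI y y.2 _).1, map_zero, sub_zero, map_zero]
  · rw [hp_mem _ (hI x x.2 _).2, hp_mem _ (hI x x.2 _).2, map_zero, sub_zero, map_zero]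
  · rw [hp_mem _ (hI y y.2 _).1, map_zero, map_zero]

/-- Let `A = A₁ ⊕ A₂` with `A₁` a subalgebra (with induced product `mul₁`), and
let `N₁ : A₁ → A₁` be a Nijenhuis tensor on `A₁`. Then the extension
`N(A) = N₁(P₁(A))` is a Nijenhuis tensor on `A` iff the three conditions
(i) `N₁²(P₁(A₂B₂)) = 0`, (ii) `N₁(P₁(N₁(A₁)B₂) − N₁(P₁(A₁B₂))) = 0`,
(iii) `N₁(P₁(A₂N₁(B₁)) − N₁(P₁(A₂B₁))) = 0` hold; in particular `N` is a
Nijenhuis tensor whenever `A₂` is a two-sided ideal. -/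
theorem extension_nijenhuis_iff
    {K A : Type*} [Field K] [NonUnitalRing A] [Module K A]
    [SMulCommClass K A A] [IsScalarTower K A A]
    (A₁ A₂ : Submodule K A) (hc : IsCompl A₁ A₂)
    (h₁ : ∀ x y : A, x ∈ A₁ → y ∈ A₁ → x * y ∈ A₁)
    (mul₁ : A₁ → A₁ → A₁)
    (hmul₁ : ∀ x y : A₁, (mul₁ x y : A) = (x : A) * (y : A))
    (N₁ : A₁ →ₗ[K] A₁)
    (hN₁ : ∀ x y : A₁,
      N₁ (mul₁ (N₁ x) y + mul₁ x (N₁ y) - N₁ (mul₁ x y)) = mul₁ (N₁ x) (N₁ y))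
    (p₁ : A →ₗ[K] A₁) (hp₁ : p₁ = A₁.linearProjOfIsCompl A₂ hc)
    (N : A →ₗ[K] A) (hN : N = A₁.subtype ∘ₗ N₁ ∘ₗ p₁) :
    ((∀ a b : A, N (N a * b + a * N b - N (a * b)) = N a * N b) ↔
      ((∀ x y : A₂, N₁ (N₁ (p₁ ((x : A) * (y : A)))) = 0) ∧
       (∀ a : A₁, ∀ y : A₂,
         N₁ (p₁ ((N₁ a : A) * (y : A)) - N₁ (p₁ ((a : A) * (y : A)))) = 0) ∧
       (∀ x : A₂, ∀ b : A₁,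
         N₁ (p₁ ((x : A) * (N₁ b : A)) - N₁ (p₁ ((x : A) * (b : A)))) = 0))) ∧
    ((∀ x ∈ A₂, ∀ a : A, a * x ∈ A₂ ∧ x * a ∈ A₂) →
      ∀ a b : A, N (N a * b + a * N b - N (a * b)) = N a * N b) :=
  extension_nijenhuis_iff_general A₁ A₂ hc mul₁ hmul₁ N₁ hN₁ p₁ hp₁ N hN
end
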